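/- arXiv:1503.00458 — 4 statements merged into one kernel-verified Lean document; each statement's English description precedes it below -/
import Mathlib

section
/- A set of vertices S of a finite simple graph G is triangle-path convex if and only if (1) no vertex outside S has two or more neighbours in S, and (2) there do not exist two non-adjacent vertices of S both having a neighbour in the same connected component of G − S. -/
open Set

variable {V : Type*}

/-- `p` is a triangle path: a path with no edge joining vertices at index
distance greater than 2 along the path. -/
def TPath (G : SimpleGraph V) {u v : V} (p : G.Walk u v) : Prop :=
  p.IsPath ∧ ∀ i j : ℕ, i + 2 < j →
    ∀ (hi : i < p.support.length) (hj : j < p.support.length),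
      ¬ G.Adj (p.support.get ⟨i, hi⟩) (p.support.get ⟨j, hj⟩)

/-- `p` is a monophonic (induced) path: a path with no edge joining vertices at
index distance greater than 1 along the path. -/
def MPath (G : SimpleGraph V) {u v : V} (p : G.Walk u v) : Prop :=
  p.IsPath ∧ ∀ i j : ℕ, i + 1 < j →
    ∀ (hi : i < p.support.length) (hj : j < p.support.length),
      ¬ G.Adj (p.support.get ⟨i, hi⟩) (p.support.get ⟨j, hj⟩)

/-- `p` is a geodesic (shortest path). -/
def GPath (G : SimpleGraph V) {u v : V} (p : G.Walk u v) : Prop :=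
  p.IsPath ∧ ∀ q : G.Walk u v, p.length ≤ q.length

/-- `S` is convex in the triangle path convexity. -/
def TConvex (G : SimpleGraph V) (S : Set V) : Prop :=
  ∀ ⦃u v : V⦄, u ∈ S → v ∈ S → ∀ p : G.Walk u v, TPath G p → ∀ w ∈ p.support, w ∈ S

/-- `S` is convex in the monophonic convexity. -/
def MConvex (G : SimpleGraph V) (S : Set V) : Prop :=
  ∀ ⦃u v : V⦄, u ∈ S → v ∈ S → ∀ p : G.Walk u v, MPath G p → ∀ w ∈ p.support, w ∈ S

/-- `S` is convex in the geodetic convexity. -/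
def GConvex (G : SimpleGraph V) (S : Set V) : Prop :=
  ∀ ⦃u v : V⦄, u ∈ S → v ∈ S → ∀ p : G.Walk u v, GPath G p → ∀ w ∈ p.support, w ∈ S

/-- `S` is `P₃`-convex: no vertex outside `S` has two neighbours in `S`. -/
def P3Convex (G : SimpleGraph V) (S : Set V) : Prop :=
  ∀ w ∉ S, ∀ a ∈ S, ∀ b ∈ S, G.Adj w a → G.Adj w b → a = b

/-- The triangle path interval of `S`. -/
def TInterval (G : SimpleGraph V) (S : Set V) : Set V :=
  S ∪ {w | ∃ u ∈ S, ∃ v ∈ S, ∃ p : G.Walk u v, TPath G p ∧ w ∈ p.support}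

/-- The monophonic interval of `S`. -/
def MInterval (G : SimpleGraph V) (S : Set V) : Set V :=
  S ∪ {w | ∃ u ∈ S, ∃ v ∈ S, ∃ p : G.Walk u v, MPath G p ∧ w ∈ p.support}

/-- The geodetic interval of `S`. -/
def GInterval (G : SimpleGraph V) (S : Set V) : Set V :=
  S ∪ {w | ∃ u ∈ S, ∃ v ∈ S, ∃ p : G.Walk u v, GPath G p ∧ w ∈ p.support}

/-- The `P₃`-interval of `S`: `S` together with the vertices having at least two
neighbours in `S`. -/
def P3Interval (G : SimpleGraph V) (S : Set V) : Set V :=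
  S ∪ {w | w ∉ S ∧ ∃ a ∈ S, ∃ b ∈ S, a ≠ b ∧ G.Adj w a ∧ G.Adj w b}

/-- The convex hull of `S` in the triangle path convexity. -/
def THull (G : SimpleGraph V) (S : Set V) : Set V :=
  ⋂₀ {C : Set V | S ⊆ C ∧ TConvex G C}

/-- The convex hull of `S` in the monophonic convexity. -/
def MHull (G : SimpleGraph V) (S : Set V) : Set V :=
  ⋂₀ {C : Set V | S ⊆ C ∧ MConvex G C}

/-- The convex hull of `S` in the geodetic convexity. -/
def GHull (G : SimpleGraph V) (S : Set V) : Set V :=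
  ⋂₀ {C : Set V | S ⊆ C ∧ GConvex G C}

/-- `K` separates the vertices `a` and `b`: both lie outside `K` and every walk
between them meets `K`. -/
def Separates (G : SimpleGraph V) (K : Set V) (a b : V) : Prop :=
  a ∉ K ∧ b ∉ K ∧ ∀ p : G.Walk a b, ∃ w ∈ p.support, w ∈ K

/-- `K` is a separator of `G`. -/
def IsSeparator (G : SimpleGraph V) (K : Set V) : Prop :=
  ∃ a b : V, Separates G K a b

/-- `G` is prime: it has no clique separator. -/
def IsPrime (G : SimpleGraph V) : Prop :=
  ¬ ∃ C : Set V, G.IsClique C ∧ IsSeparator G C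

/-- `K` is a minimal separator for `a` and `b`. -/
def IsMinSeparator (G : SimpleGraph V) (K : Set V) (a b : V) : Prop :=
  Separates G K a b ∧ ∀ K' : Set V, K' ⊂ K → ¬ Separates G K' a b

/-- `W` induces a maximal prime subgraph of `G`. -/
def IsMPSubgraph (G : SimpleGraph V) (W : Set V) : Prop :=
  IsPrime (G.induce W) ∧ ∀ W' : Set V, W ⊆ W' → IsPrime (G.induce W') → W' = W

/-- `C` is the vertex set of a connected component of `G - S`. -/
def IsCompOf (G : SimpleGraph V) (S C : Set V) : Prop :=
  C.Nonempty ∧ C ∩ S = ∅ ∧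
  (∀ x ∈ C, ∀ y ∈ C, ∃ p : G.Walk x y, ∀ w ∈ p.support, w ∈ C) ∧
  (∀ x ∈ C, ∀ y : V, y ∉ S → G.Adj x y → y ∈ C)

/-!
A vertex `w ∉ S` adjacent to distinct `a, b ∈ S` gives the triangle path `a w b` leaving `S`.
If nonadjacent `u, v ∈ S` have neighbours joined in `G - S`, a shortest walk from `u` to `v`
through `G - S` is a chordless path, hence a triangle path leaving `S`. Conversely, a triangle
path between vertices of `S` that leaves `S` contains a maximal stretch outside `S`; the two
vertices of `S` bounding it are distinct, and they are nonadjacent unless they are two steps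
apart, so they violate one of the two conditions.
-/

namespace SimpleGraph.Walk

variable {G : SimpleGraph V} {u v : V}

lemma forall_support_get_not_adj_iff (p : G.Walk u v) (k : ℕ) :
    (∀ i j : ℕ, i + k < j → ∀ (hi : i < p.support.length) (hj : j < p.support.length),
      ¬ G.Adj (p.support.get ⟨i, hi⟩) (p.support.get ⟨j, hj⟩)) ↔
    ∀ i j : ℕ, i + k < j → j ≤ p.length → ¬ G.Adj (p.getVert i) (p.getVert j) := by
  simp only [List.get_eq_getElem, support_getElem_eq_getVert, length_support]
  exact forall₃_congr fun i j _ =>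
    ⟨fun h hj => h (by omega) (by omega), fun h _ hj => h (by omega)⟩

lemma exists_shorter_of_adj_getVert (p : G.Walk u v) {i j : ℕ} (hij : i + 1 < j)
    (hj : j ≤ p.length) (hadj : G.Adj (p.getVert i) (p.getVert j)) :
    ∃ q : G.Walk u v, q.length < p.length ∧ q.support ⊆ p.support := by
  refine ⟨(p.take i).append (cons hadj (p.drop j)), ?_, ?_⟩
  · simp only [length_append, take_length, length_cons, drop_length]
    omega
  · rw [support_append, support_cons, List.tail_cons, List.append_subset, support_take,
      drop_support_eq_support_drop_min]
    exact ⟨List.take_subset _ _, List.drop_subset _ _⟩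

lemma exists_walk_getVert_support_getVert (p : G.Walk u v) {a b : ℕ} (hab : a ≤ b) :
    ∃ q : G.Walk (p.getVert a) (p.getVert b),
      ∀ x ∈ q.support, ∃ t, a ≤ t ∧ t ≤ b ∧ p.getVert t = x := by
  refine ⟨((p.drop a).take (b - a)).copy rfl (by rw [drop_getVert, Nat.add_sub_cancel' hab]),
    fun x hx => ?_⟩
  obtain ⟨n, rfl, -⟩ := mem_support_iff_exists_getVert.mp ((support_copy ..) ▸ hx)
  exact ⟨a + min (b - a) n, by omega, by omega, by rw [take_getVert, drop_getVert]⟩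

lemma exists_excursion {S : Set V} (p : G.Walk u v) (hu : u ∈ S) (hv : v ∈ S) {w : V}
    (hw : w ∈ p.support) (hwS : w ∉ S) :
    ∃ i j, i + 1 < j ∧ j ≤ p.length ∧ p.getVert i ∈ S ∧ p.getVert j ∈ S ∧
      ∀ t, i < t → t < j → p.getVert t ∉ S := by
  classical
  obtain ⟨k, rfl, hk⟩ := mem_support_iff_exists_getVert.mp hw
  have hback : p.getVert 0 ∈ S := by rwa [getVert_zero]
  have hfwd : ∃ j, k ≤ j ∧ p.getVert j ∈ S := ⟨p.length, hk, by rwa [getVert_length]⟩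
  set i := Nat.findGreatest (fun t => p.getVert t ∈ S) k
  set j := Nat.find hfwd
  have hi : p.getVert i ∈ S :=
    Nat.findGreatest_spec (P := fun t => p.getVert t ∈ S) (Nat.zero_le k) hback
  obtain ⟨hkj, hj⟩ := Nat.find_spec hfwd
  have hik : i < k := (Nat.findGreatest_le k).lt_of_ne fun h => hwS (h ▸ hi)
  have hkj : k < j := hkj.lt_of_ne fun h => hwS (h ▸ hj)
  refine ⟨i, j, by omega, (Nat.find_min' hfwd ⟨hk, by rwa [getVert_length]⟩), hi, hj,
    fun t hit htj ht => ?_⟩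
  rcases le_or_gt t k with htk | hkt
  · exact Nat.findGreatest_is_greatest hit htk ht
  · exact Nat.find_min hfwd htj ⟨hkt.le, ht⟩

end SimpleGraph.Walk

section

variable {G : SimpleGraph V}

open SimpleGraph Walk

lemma tPath_iff_getVert {u v : V} (p : G.Walk u v) :
    TPath G p ↔ p.IsPath ∧
      ∀ i j : ℕ, i + 2 < j → j ≤ p.length → ¬ G.Adj (p.getVert i) (p.getVert j) :=
  and_congr_right fun _ => p.forall_support_get_not_adj_iff 2

lemma mPath_iff_getVert {u v : V} (p : G.Walk u v) :
    MPath G p ↔ p.IsPath ∧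
      ∀ i j : ℕ, i + 1 < j → j ≤ p.length → ¬ G.Adj (p.getVert i) (p.getVert j) :=
  and_congr_right fun _ => p.forall_support_get_not_adj_iff 1

lemma MPath.tPath {u v : V} {p : G.Walk u v} (hp : MPath G p) : TPath G p := by
  rw [mPath_iff_getVert] at hp
  exact (tPath_iff_getVert p).mpr ⟨hp.1, fun i j hij => hp.2 i j (by omega)⟩

lemma exists_mPath_support_subset {u v : V} (p : G.Walk u v) :
    ∃ q : G.Walk u v, MPath G q ∧ q.support ⊆ p.support := by
  classical
  obtain ⟨q, hqp, hmin⟩ := (measure fun q : G.Walk u v => q.length).wf.has_min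
    {q | q.support ⊆ p.support} ⟨p, List.Subset.refl _⟩
  have hbp : q.bypass.support ⊆ p.support := List.Subset.trans q.support_bypass_subset_support hqp
  -- `q.bypass` is again a shortest walk, and a shortest walk has no chord
  refine ⟨q.bypass,
    (mPath_iff_getVert _).mpr ⟨q.bypass_isPath, fun i j hij hj hadj => ?_⟩, hbp⟩
  obtain ⟨r, hr, hrs⟩ := q.bypass.exists_shorter_of_adj_getVert hij hj hadj
  exact hmin r (List.Subset.trans hrs hbp) (hr.trans_le q.length_bypass_le_length)

lemma TConvex.p3Convex {S : Set V} (hS : TConvex G S) : P3Convex G S := by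
  intro w hw a ha b hb hwa hwb
  by_contra hab
  have hpath : TPath G (cons hwa.symm (cons hwb nil)) := by
    refine (tPath_iff_getVert _).mpr ⟨?_, fun i j hij hj => ?_⟩
    · simp [hwa.ne', hwb.ne, hab]
    · simp only [length_cons, length_nil] at hj
      omega
  exact hw (hS ha hb _ hpath w (by simp))

lemma TConvex.adj_of_walk_outside {S : Set V} (hS : TConvex G S) {u v u' v' : V}
    (hu : u ∈ S) (hv : v ∈ S) (huv : u ≠ v) (huu' : G.Adj u u') (hvv' : G.Adj v v')
    (p : G.Walk u' v') (hp : ∀ w ∈ p.support, w ∉ S) :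
    G.Adj u v := by
  by_contra hnadj
  obtain ⟨q, hq, hqs⟩ := exists_mPath_support_subset (cons huu' (p.concat hvv'.symm))
  have hq2 : 2 ≤ q.length := by
    by_contra! h
    interval_cases hlen : q.length
    · exact huv (eq_of_length_eq_zero hlen)
    · exact hnadj (adj_of_length_eq_one hlen)
  have hinj := ((mPath_iff_getVert q).mp hq).1.getVert_injOn
  have hx : q.getVert 1 ∈ q.support := q.getVert_mem_support 1
  have hxu : q.getVert 1 ≠ u := fun h => by
    have := hinj (show 1 ≤ q.length by omega) (Nat.zero_le _) (h.trans q.getVert_zero.symm)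
    omega
  have hxv : q.getVert 1 ≠ v := fun h => by
    have := hinj (show 1 ≤ q.length by omega) (le_refl q.length) (h.trans q.getVert_length.symm)
    omega
  have hxS : q.getVert 1 ∉ S := by
    have := hqs hx
    rw [support_cons, support_concat, List.mem_cons, List.mem_append,
      List.mem_singleton] at this
    rcases this with h | h | h
    exacts [absurd h hxu, hp _ h, absurd h hxv]
  exact hxS (hS hu hv q hq.tPath _ hx)

lemma tConvex_of_p3Convex {S : Set V} (h₁ : P3Convex G S)
    (h₂ : ∀ ⦃u v u' v' : V⦄, u ∈ S → v ∈ S → u ≠ v → G.Adj u u' →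
      G.Adj v v' → ∀ p : G.Walk u' v', (∀ w ∈ p.support, w ∉ S) → G.Adj u v) :
    TConvex G S := by
  intro u v hu hv p hp w hw
  by_contra hwS
  obtain ⟨i, j, hij, hj, hi, hjS, hout⟩ := p.exists_excursion hu hv hw hwS
  rw [tPath_iff_getVert] at hp
  have hinj := hp.1.getVert_injOn
  have hne : p.getVert i ≠ p.getVert j := fun h => by
    have := hinj (show i ≤ p.length by omega) hj h
    omega
  have hadj_i : G.Adj (p.getVert i) (p.getVert (i + 1)) := p.adj_getVert_succ (by omega)
  have hadj_j : G.Adj (p.getVert j) (p.getVert (j - 1)) := by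
    have := p.adj_getVert_succ (i := j - 1) (by omega)
    rw [Nat.sub_add_cancel (by omega : 1 ≤ j)] at this
    exact this.symm
  rcases (by omega : j = i + 2 ∨ i + 2 < j) with rfl | hlt
  · exact hne (h₁ _ (hout (i + 1) (by omega) (by omega)) _ hi _ hjS hadj_i.symm hadj_j.symm)
  · obtain ⟨q, hq⟩ := p.exists_walk_getVert_support_getVert (by omega : i + 1 ≤ j - 1)
    refine hp.2 i j hlt hj (h₂ hi hjS hne hadj_i hadj_j q fun x hx => ?_)
    obtain ⟨t, hit, htj, rfl⟩ := hq x hx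
    exact hout t (by omega) (by omega)

end

theorem stmt_0_general (G : SimpleGraph V) (S : Set V) :
    TConvex G S ↔
      (∀ w ∉ S, ∀ a ∈ S, ∀ b ∈ S, G.Adj w a → G.Adj w b → a = b) ∧
      ¬ ∃ u ∈ S, ∃ v ∈ S, u ≠ v ∧ ¬ G.Adj u v ∧
        ∃ u' v' : V, u' ∉ S ∧ v' ∉ S ∧ G.Adj u u' ∧ G.Adj v v' ∧
          ∃ p : G.Walk u' v', ∀ w ∈ p.support, w ∉ S := by
  refine ⟨fun hS => ⟨hS.p3Convex, ?_⟩, fun ⟨h₁, h₂⟩ => tConvex_of_p3Convex h₁ ?_⟩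
  · rintro ⟨u, hu, v, hv, huv, hnadj, u', v', -, -, huu', hvv', p, hp⟩
    exact hnadj (hS.adj_of_walk_outside hu hv huv huu' hvv' p hp)
  · intro u v u' v' hu hv huv huu' hvv' p hp
    by_contra hnadj
    exact h₂ ⟨u, hu, v, hv, huv, hnadj, u', v', hp _ p.start_mem_support,
      hp _ p.end_mem_support, huu', hvv', p, hp⟩

theorem stmt_0 [Fintype V] (G : SimpleGraph V) (S : Set V) :
    TConvex G S ↔
      (∀ w ∉ S, ∀ a ∈ S, ∀ b ∈ S, G.Adj w a → G.Adj w b → a = b) ∧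
      ¬ ∃ u ∈ S, ∃ v ∈ S, u ≠ v ∧ ¬ G.Adj u v ∧
        ∃ u' v' : V, u' ∉ S ∧ v' ∉ S ∧ G.Adj u u' ∧ G.Adj v v' ∧
          ∃ p : G.Walk u' v', ∀ w ∈ p.support, w ∉ S :=
  stmt_0_general G S
end

section
/- Let G be a graph, S a t-convex set of G, and suppose S contains two vertices of some clique K that is a minimal separator of G. Then S contains all vertices of K. -/
open Set

variable {V : Type*}

theorem stmt_13 [Fintype V] (G : SimpleGraph V) (S : Set V) (hS : TConvex G S)
    (K : Set V) (hK : G.IsClique K)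
    (hsep : ∃ a b : V, IsMinSeparator G K a b)
    (x y : V) (hx : x ∈ S ∩ K) (hy : y ∈ S ∩ K) (hxy : x ≠ y) :
    K ⊆ S := by
  intro z hz
  by_cases hzx : z = x
  · exact hzx ▸ hx.1
  by_cases hzy : z = y
  · exact hzy ▸ hy.1
  have haxz : G.Adj x z := hK hx.2 hz (fun h => hzx h.symm)
  have hazy : G.Adj z y := hK hz hy.2 hzy
  let p : G.Walk x y := SimpleGraph.Walk.cons haxz (SimpleGraph.Walk.cons hazy SimpleGraph.Walk.nil)
  have hpath : TPath G p := by
    constructor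
    · rw [SimpleGraph.Walk.isPath_def]
      simp only [p, SimpleGraph.Walk.support_cons, SimpleGraph.Walk.support_nil]
      simp [List.nodup_cons, hzx, hzy, hxy, Ne.symm hzx]
    · intro i j hij hi hj
      have hlen : p.support.length = 3 := rfl
      rw [hlen] at hj
      omega
  have := hS hx.1 hy.1 p hpath z
  apply this
  simp [p, SimpleGraph.Walk.support_cons]
end

section
/- Let G be a graph, C a clique of G, and H a union of some (but not all, and at least zero) connected components of G − C. If every vertex outside C ∪ V(H) has at most one neighbour in C, then S = C ∪ V(H) is a t-convex set of G. -/
open Set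

variable {V : Type*}

lemma support_get_eq_getVert {G : SimpleGraph V} :
    ∀ {u v : V} (p : G.Walk u v) (i : ℕ) (hi : i < p.support.length),
      p.support.get ⟨i, hi⟩ = p.getVert i := by
  intro u v p
  induction p with
  | nil => intro i hi; simp at hi; subst hi; rfl
  | cons h q ih =>
    intro i hi
    cases i with
    | zero => simp [SimpleGraph.Walk.getVert_zero]
    | succ n =>
      simp only [SimpleGraph.Walk.support_cons, List.get_cons_succ,
        SimpleGraph.Walk.getVert_cons_succ]
      exact ih n _

lemma support_length_eq {G : SimpleGraph V} {u v : V} (p : G.Walk u v) :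
    p.support.length = p.length + 1 := by
  simp [SimpleGraph.Walk.length_support]

theorem stmt_15 [Fintype V] (G : SimpleGraph V) (C H : Set V)
    (hC : G.IsClique C)
    (hHC : H ∩ C = ∅)
    (hclosed : ∀ x ∈ H, ∀ y : V, y ∉ C →
      (∃ p : G.Walk x y, ∀ w ∈ p.support, w ∉ C) → y ∈ H)
    (hnotall : C ∪ H ≠ Set.univ)
    (hdeg : ∀ w ∉ C ∪ H, ∀ a ∈ C, ∀ b ∈ C, G.Adj w a → G.Adj w b → a = b) :
    TConvex G (C ∪ H) := by
  classical
  set S := C ∪ H with hS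
  intro u v hu hv p hp w hw
  by_contra hwS
  obtain ⟨k, hkw, hkle⟩ := SimpleGraph.Walk.mem_support_iff_exists_getVert.mp hw
  -- k ≠ 0 and k ≠ p.length
  have hgv0 : p.getVert 0 = u := p.getVert_zero
  have hgvl : p.getVert p.length = v := p.getVert_length
  have hk0 : 0 < k := by
    rcases Nat.eq_zero_or_pos k with h | h
    · exfalso; apply hwS; rw [← hkw, h, hgv0]; exact hu
    · exact h
  have hklt : k < p.length := by
    rcases lt_or_eq_of_le hkle with h | h
    · exact h
    · exfalso; apply hwS; rw [← hkw, h, hgvl]; exact hv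
  -- i : greatest index < k with getVert ∈ S
  set i := Nat.findGreatest (fun m => p.getVert m ∈ S) (k - 1) with hi_def
  have hik : i ≤ k - 1 := Nat.findGreatest_le _
  have hiS : p.getVert i ∈ S :=
    Nat.findGreatest_spec (P := fun m => p.getVert m ∈ S) (Nat.zero_le _)
      (by show p.getVert 0 ∈ S; rw [hgv0]; exact hu)
  have hilt : i < k := lt_of_le_of_lt hik (Nat.sub_lt hk0 one_pos)
  have hi_max : ∀ m, i < m → m ≤ k - 1 → p.getVert m ∉ S := by
    intro m h1 h2
    exact Nat.findGreatest_is_greatest (P := fun m => p.getVert m ∈ S) h1 h2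
  -- j : least index > k with getVert ∈ S
  have hex : ∃ j, k < j ∧ p.getVert j ∈ S := by
    exact ⟨p.length, hklt, by rw [hgvl]; exact hv⟩
  set j := Nat.find hex with hj_def
  have hkj : k < j := (Nat.find_spec hex).1
  have hjS : p.getVert j ∈ S := (Nat.find_spec hex).2
  have hjle : j ≤ p.length := Nat.find_min' hex ⟨hklt, by rw [hgvl]; exact hv⟩
  have hj_min : ∀ m, k < m → m < j → p.getVert m ∉ S := by
    intro m h1 h2
    have := Nat.find_min hex h2
    simp only [not_and] at this
    exact this h1
  -- all strictly between i and j are outside S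
  have hbetween : ∀ m, i < m → m < j → p.getVert m ∉ S := by
    intro m h1 h2
    rcases lt_trichotomy m k with h | h | h
    · exact hi_max m h1 (Nat.le_sub_one_of_lt h)
    · subst h; rw [hkw]; exact hwS
    · exact hj_min m h h2
  -- getVert i ∈ C
  have hiC : p.getVert i ∈ C := by
    by_contra hnc
    have hiH : p.getVert i ∈ H := hiS.resolve_left hnc
    have hadj : G.Adj (p.getVert i) (p.getVert (i + 1)) :=
      p.adj_getVert_succ (lt_of_lt_of_le hilt hkle)
    have hy : p.getVert (i + 1) ∉ S :=
      hbetween (i + 1) (Nat.lt_succ_self i) (by omega)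
    have hyC : p.getVert (i + 1) ∉ C := fun h => hy (Or.inl h)
    have hiCne : p.getVert i ∉ C := by
      intro h
      have : p.getVert i ∈ H ∩ C := ⟨hiH, h⟩
      rw [hHC] at this; exact this
    have : p.getVert (i + 1) ∈ H := by
      apply hclosed _ hiH _ hyC
      refine ⟨SimpleGraph.Walk.cons hadj SimpleGraph.Walk.nil, ?_⟩
      intro x hx
      simp [SimpleGraph.Walk.support_cons, SimpleGraph.Walk.support_nil] at hx
      rcases hx with h | h
      · rw [h]; exact hiCne
      · rw [h]; exact hyC
    exact hy (Or.inr this)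
  -- getVert j ∈ C
  have hjC : p.getVert j ∈ C := by
    by_contra hnc
    have hjH : p.getVert j ∈ H := hjS.resolve_left hnc
    have hj1 : j - 1 < p.length := by omega
    have hadj : G.Adj (p.getVert (j - 1)) (p.getVert j) := by
      have := p.adj_getVert_succ hj1
      rwa [Nat.sub_add_cancel (by omega : 1 ≤ j)] at this
    have hy : p.getVert (j - 1) ∉ S := by
      apply hbetween (j - 1) (by omega) (by omega)
    have hyC : p.getVert (j - 1) ∉ C := fun h => hy (Or.inl h)
    have hjCne : p.getVert j ∉ C := by
      intro h
      have : p.getVert j ∈ H ∩ C := ⟨hjH, h⟩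
      rw [hHC] at this; exact this
    have : p.getVert (j - 1) ∈ H := by
      apply hclosed _ hjH _ hyC
      refine ⟨SimpleGraph.Walk.cons hadj.symm SimpleGraph.Walk.nil, ?_⟩
      intro x hx
      simp [SimpleGraph.Walk.support_cons, SimpleGraph.Walk.support_nil] at hx
      rcases hx with h | h
      · rw [h]; exact hjCne
      · rw [h]; exact hyC
    exact hy (Or.inr this)
  -- getVert i ≠ getVert j
  have hsuplen : p.support.length = p.length + 1 := support_length_eq p
  have hisup : i < p.support.length := by omega
  have hjsup : j < p.support.length := by omega
  have hnodup : p.support.Nodup := hp.1.support_nodup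
  have hne : p.getVert i ≠ p.getVert j := by
    intro h
    have : p.support.get ⟨i, hisup⟩ = p.support.get ⟨j, hjsup⟩ := by
      rw [support_get_eq_getVert, support_get_eq_getVert, h]
    have := List.Nodup.get_inj_iff hnodup |>.mp this
    simp at this
    omega
  rcases eq_or_lt_of_le (by omega : i + 2 ≤ j) with heq | hlt
  · -- j = i + 2: middle vertex has two neighbours in C
    have hmid : p.getVert (i + 1) ∉ S := hbetween (i + 1) (by omega) (by omega)
    have ha1 : G.Adj (p.getVert (i + 1)) (p.getVert i) :=
      (p.adj_getVert_succ (by omega)).symm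
    have ha2 : G.Adj (p.getVert (i + 1)) (p.getVert j) := by
      have := p.adj_getVert_succ (i := i + 1) (by omega)
      rwa [show i + 1 + 1 = j by omega] at this
    exact hne (hdeg _ hmid _ hiC _ hjC ha1 ha2)
  · -- j > i + 2: clique edge contradicts TPath
    have hadjij : G.Adj (p.getVert i) (p.getVert j) := hC hiC hjC hne
    have := hp.2 i j hlt hisup hjsup
    rw [support_get_eq_getVert, support_get_eq_getVert] at this
    exact this hadjij
end

section
/- Let G be a graph and S ⊆ V(G). If S is not t-convex, then either there is a vertex v ∉ S with at least two neighbours in S, or there exist a connected component C of G − S and non-adjacent u, v ∈ S each having a neighbour in C; in the latter case, any shortest u–v path in the induced subgraph G[V(C) ∪ {u, v}] is an induced path of G all of whose internal vertices lie outside S. -/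
open Set

variable {V : Type*}

/-!
Take a triangle path between two vertices of `S` that leaves `S`, and on it a maximal run of
consecutive vertices outside `S`, bounded by `a, b ∈ S`. If the run is a single vertex, that vertex
has the two neighbours `a ≠ b` in `S`. Otherwise `a` and `b` are at least three steps apart on a
triangle path, hence non-adjacent, and the run lies in one component `C` of `G - S` touching both.
A shortest `a`–`b` path in `G[C ∪ {a, b}]` has no chord, since a chord would shorten it, and its
inner vertices lie in `C`.
-/

namespace Nat

lemma exists_bracketing_run {P : ℕ → Prop} [DecidablePred P] {k n : ℕ} (h0 : P 0) (hn : P n)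
    (hk : ¬ P k) (hkn : k ≤ n) :
    ∃ i j, i < k ∧ k < j ∧ j ≤ n ∧ P i ∧ P j ∧ ∀ m, i < m → m < j → ¬ P m := by
  have hnext : ∃ j, k < j ∧ j ≤ n ∧ P j :=
    ⟨n, lt_of_le_of_ne hkn (by rintro rfl; exact hk hn), le_rfl, hn⟩
  obtain ⟨hkj, hjn, hj⟩ := Nat.find_spec hnext
  have hi : P (Nat.findGreatest P k) := Nat.findGreatest_spec (Nat.zero_le k) h0
  have hik : Nat.findGreatest P k < k :=
    (Nat.findGreatest_le k).lt_of_ne fun h => hk (h ▸ hi)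
  refine ⟨_, _, hik, hkj, hjn, hi, hj, fun m him hmj hm => ?_⟩
  rcases le_or_gt m k with hmk | hkm
  · exact Nat.findGreatest_is_greatest him hmk hm
  · exact Nat.find_min hnext hmj ⟨hkm, by omega, hm⟩

end Nat

namespace SimpleGraph.Walk

variable {G : SimpleGraph V} {u v : V}

lemma not_adj_getVert_of_forall_length_le {p : G.Walk u v}
    (hp : ∀ q : G.Walk u v, p.length ≤ q.length) {i j : ℕ} (hij : i + 1 < j)
    (hj : j ≤ p.length) : ¬ G.Adj (p.getVert i) (p.getVert j) := fun hadj => by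
  have := hp ((p.take i).append (cons hadj (p.drop j)))
  simp only [length_append, take_length, length_cons, drop_length] at this
  omega

lemma exists_walk_getVert_getVert (p : G.Walk u v) {s t : ℕ} (hst : s ≤ t) :
    ∃ q : G.Walk (p.getVert s) (p.getVert t),
      ∀ x ∈ q.support, ∃ m, s ≤ m ∧ m ≤ t ∧ p.getVert m = x := by
  refine ⟨((p.drop s).take (t - s)).copy rfl (by rw [drop_getVert]; congr 1; omega), ?_⟩
  intro x hx
  obtain ⟨n, rfl, -⟩ := mem_support_iff_exists_getVert.1 hx
  refine ⟨s + min (t - s) n, by omega, by omega, ?_⟩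
  simp

end SimpleGraph.Walk

open SimpleGraph Walk

section

variable {G : SimpleGraph V} {u v : V}

lemma TPath.not_adj_getVert {p : G.Walk u v} (hp : TPath G p) {i j : ℕ} (hij : i + 2 < j)
    (hj : j ≤ p.length) : ¬ G.Adj (p.getVert i) (p.getVert j) := by
  simpa [support_getElem_eq_getVert] using
    hp.2 i j hij (by simp; omega) (by simp; omega)

lemma mPath_of_forall_not_adj_getVert {p : G.Walk u v} (hp : p.IsPath)
    (h : ∀ i j, i + 1 < j → j ≤ p.length → ¬ G.Adj (p.getVert i) (p.getVert j)) : MPath G p :=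
  ⟨hp, fun i j hij _ hj => by
    simpa [support_getElem_eq_getVert] using h i j hij (by simp at hj; omega)⟩

lemma GPath.mPath_map {W : Type*} {H : SimpleGraph W} (f : H ↪g G) {x y : W} {p : H.Walk x y}
    (hp : GPath H p) : MPath G (p.map f.toHom) :=
  mPath_of_forall_not_adj_getVert (hp.1.map f.injective) fun i j hij hj => by
    rw [getVert_map, getVert_map]
    simpa using not_adj_getVert_of_forall_length_le hp.2 hij (by simpa using hj)

variable {S : Set V} {c : V}

def avoidingComponent (G : SimpleGraph V) (S : Set V) (c : V) : Set V :=
  {x | ∃ r : G.Walk c x, ∀ y ∈ r.support, y ∉ S}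

lemma notMem_of_mem_avoidingComponent {x : V} (hx : x ∈ avoidingComponent G S c) : x ∉ S :=
  let ⟨r, hr⟩ := hx
  hr x r.end_mem_support

lemma mem_avoidingComponent_self (hc : c ∉ S) : c ∈ avoidingComponent G S c :=
  ⟨nil, by simpa using hc⟩

lemma mem_avoidingComponent_of_mem_support [DecidableEq V] {x : V} {r : G.Walk c x}
    (hr : ∀ y ∈ r.support, y ∉ S) {z : V} (hz : z ∈ r.support) : z ∈ avoidingComponent G S c :=
  ⟨r.takeUntil z hz, fun y hy => hr y (r.support_takeUntil_subset_support hz hy)⟩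

lemma isCompOf_avoidingComponent (hc : c ∉ S) : IsCompOf G S (avoidingComponent G S c) := by
  classical
  refine ⟨⟨c, mem_avoidingComponent_self hc⟩,
    eq_empty_iff_forall_notMem.2 fun x hx => notMem_of_mem_avoidingComponent hx.1 hx.2, ?_, ?_⟩
  · rintro x ⟨rx, hrx⟩ y ⟨ry, hry⟩
    refine ⟨rx.reverse.append ry, fun z hz => ?_⟩
    rw [mem_support_append_iff, support_reverse, List.mem_reverse] at hz
    exact hz.elim (mem_avoidingComponent_of_mem_support hrx)
      (mem_avoidingComponent_of_mem_support hry)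
  · rintro x ⟨r, hr⟩ y hy hxy
    refine ⟨r.concat hxy, fun z hz => ?_⟩
    rw [support_concat, List.mem_append, List.mem_singleton] at hz
    exact hz.elim (hr z) fun h => h ▸ hy

lemma TPath.exists_p3_or_bridge {w : V} (hu : u ∈ S) (hv : v ∈ S) {p : G.Walk u v}
    (hp : TPath G p) (hw : w ∈ p.support) (hwS : w ∉ S) :
    (∃ w ∉ S, ∃ a ∈ S, ∃ b ∈ S, a ≠ b ∧ G.Adj w a ∧ G.Adj w b) ∨
    (∃ a ∈ S, ∃ b ∈ S, a ≠ b ∧ ¬ G.Adj a b ∧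
      ∃ c ∉ S, G.Adj a c ∧ ∃ d ∈ avoidingComponent G S c, G.Adj b d) := by
  classical
  obtain ⟨k, rfl, hk⟩ := mem_support_iff_exists_getVert.1 hw
  obtain ⟨i, j, hik, hkj, hjn, hi, hj, hgap⟩ :=
    Nat.exists_bracketing_run (P := (p.getVert · ∈ S)) (by simpa) (by simpa) hwS hk
  have hne : p.getVert i ≠ p.getVert j := fun h => by
    have := hp.1.getVert_injOn (by simp; omega) (by simp; omega) h
    omega
  by_cases hji : j = i + 2
  · obtain rfl : k = i + 1 := by omega
    subst hji
    exact .inl ⟨_, hwS, _, hi, _, hj, hne, (p.adj_getVert_succ (by omega)).symm,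
      p.adj_getVert_succ (by omega)⟩
  · obtain ⟨q, hq⟩ := p.exists_walk_getVert_getVert (s := i + 1) (t := j - 1) (by omega)
    have hbd : G.Adj (p.getVert j) (p.getVert (j - 1)) := by
      simpa [show j - 1 + 1 = j by omega] using (p.adj_getVert_succ (i := j - 1) (by omega)).symm
    refine .inr ⟨_, hi, _, hj, hne, hp.not_adj_getVert (by omega) hjn,
      _, hgap _ (by omega) (by omega), p.adj_getVert_succ (by omega), _, ⟨q, ?_⟩, hbd⟩
    rintro x hx
    obtain ⟨m, h1, h2, rfl⟩ := hq x hx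
    exact hgap m (by omega) (by omega)

end

theorem stmt_17_general (G : SimpleGraph V) (S : Set V)
    (h : ¬ TConvex G S) :
    (∃ w ∉ S, ∃ a ∈ S, ∃ b ∈ S, a ≠ b ∧ G.Adj w a ∧ G.Adj w b) ∨
    (∃ C : Set V, IsCompOf G S C ∧ ∃ u ∈ S, ∃ v ∈ S, u ≠ v ∧ ¬ G.Adj u v ∧
      (∃ u' ∈ C, G.Adj u u') ∧ (∃ v' ∈ C, G.Adj v v') ∧
      ∀ (hu : u ∈ C ∪ {u, v}) (hv : v ∈ C ∪ {u, v})
        (p : (G.induce (C ∪ {u, v})).Walk ⟨u, hu⟩ ⟨v, hv⟩),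
        GPath (G.induce (C ∪ {u, v})) p →
          MPath G (p.map (SimpleGraph.Embedding.induce (C ∪ {u, v})).toHom) ∧
          ∀ w ∈ (p.map (SimpleGraph.Embedding.induce (C ∪ {u, v})).toHom).support,
            w ≠ u → w ≠ v → w ∉ S) := by
  obtain ⟨u, v, hu, hv, p, hp, w, hw, hwS⟩ : ∃ u v, u ∈ S ∧ v ∈ S ∧
      ∃ p : G.Walk u v, TPath G p ∧ ∃ w ∈ p.support, w ∉ S := by
    simpa [TConvex] using h
  refine (hp.exists_p3_or_bridge hu hv hw hwS).imp id ?_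
  rintro ⟨a, ha, b, hb, hab, hnadj, c, hc, hac, d, hd, hbd⟩
  refine ⟨_, isCompOf_avoidingComponent hc, a, ha, b, hb, hab, hnadj,
    ⟨c, mem_avoidingComponent_self hc, hac⟩, ⟨d, hd, hbd⟩,
    fun _ _ q hq => ⟨hq.mPath_map _, fun x hx hxa hxb => ?_⟩⟩
  rw [Walk.support_map, List.mem_map] at hx
  obtain ⟨⟨x, hxC | hxab⟩, -, rfl⟩ := hx
  · exact notMem_of_mem_avoidingComponent hxC
  · exact (hxab.elim hxa hxb).elim

theorem stmt_17 [Fintype V] (G : SimpleGraph V) (S : Set V)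
    (h : ¬ TConvex G S) :
    (∃ w ∉ S, ∃ a ∈ S, ∃ b ∈ S, a ≠ b ∧ G.Adj w a ∧ G.Adj w b) ∨
    (∃ C : Set V, IsCompOf G S C ∧ ∃ u ∈ S, ∃ v ∈ S, u ≠ v ∧ ¬ G.Adj u v ∧
      (∃ u' ∈ C, G.Adj u u') ∧ (∃ v' ∈ C, G.Adj v v') ∧
      ∀ (hu : u ∈ C ∪ {u, v}) (hv : v ∈ C ∪ {u, v})
        (p : (G.induce (C ∪ {u, v})).Walk ⟨u, hu⟩ ⟨v, hv⟩),
        GPath (G.induce (C ∪ {u, v})) p →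
          MPath G (p.map (SimpleGraph.Embedding.induce (C ∪ {u, v})).toHom) ∧
          ∀ w ∈ (p.map (SimpleGraph.Embedding.induce (C ∪ {u, v})).toHom).support,
            w ≠ u → w ≠ v → w ∉ S) :=
  stmt_17_general G S h
end
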